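/- Let n ≥ 2 and let z : Fin n → ℂ be admissible with Δ(z) = Δmax(n) (a maximizer). Let G be the diameter graph of z, i.e. the simple graph on Fin n with i adjacent to j iff i ≠ j and dist (z i) (z j) = 2. Then G contains no cycle of even length: for every vertex v and every closed walk w from v to v in G which is a cycle, the length of w is odd. -/

import Mathlib

/-- The product over all ordered pairs `(i,j)` with `i ≠ j` of `dist (z i) (z j)`. -/
noncomputable def Delta (n : ℕ) (z : Fin n → ℂ) : ℝ :=
  ∏ p ∈ Finset.univ.filter (fun p : Fin n × Fin n => p.1 ≠ p.2), dist (z p.1) (z p.2)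

/-- `z` is admissible if all pairwise distances are at most 2. -/
def Admissible (n : ℕ) (z : Fin n → ℂ) : Prop :=
  ∀ i j, dist (z i) (z j) ≤ 2

/-- The maximal discriminant over admissible configurations. -/
noncomputable def Dmax (n : ℕ) : ℝ :=
  sSup {d : ℝ | ∃ z : Fin n → ℂ, Admissible n z ∧ Delta n z = d}

/-- The diameter graph of a configuration: `i` adjacent to `j` iff `i ≠ j` and
`dist (z i) (z j) = 2`. -/
def diamGraph (n : ℕ) (z : Fin n → ℂ) : SimpleGraph (Fin n) where
  Adj i j := i ≠ j ∧ dist (z i) (z j) = 2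
  symm := ⟨fun i j h => ⟨h.1.symm, by rw [dist_comm]; exact h.2⟩⟩
  loopless := ⟨fun i h => h.1 rfl⟩

/-!
Any two diameters of a planar set meet: by Radon's theorem the four endpoints split into two parts
whose convex hulls meet, and in each case the triangle inequality, tight along a diameter, forces
that common point onto both diameters. Moreover, an endpoint of a diameter cannot lie on the line
of another diameter unless it is one of its endpoints, by strict convexity of the closed ball.

Now take an even cycle `u₀ u₁ ⋯ u_{m-1} u₀` in the diameter graph and the line `ℓ = u₀u₁`. The
vertices `u₂, …, u_{m-1}` lie off `ℓ`, and each edge `u_iu_{i+1}` among them crosses the segment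
`u₀u₁`, so they alternate sides of `ℓ`; as `m` is even, `u₂` and `u_{m-1}` lie on opposite sides.
But the edges `u₁u₂` and `u_{m-1}u₀` meet, and apart from `u₁` and `u₀` these lie on the sides of
`u₂` and `u_{m-1}` respectively. A maximizer has distinct points since `Δmax(n) > 0`.
-/

open Set

section Geometry

variable {E : Type*} [NormedAddCommGroup E] [NormedSpace ℝ E] {a b c d x : E} {r : ℝ}

lemma eq_of_mem_segment_of_dist_le {y : E} (hx : x ∈ segment ℝ b y) (h : dist b y ≤ dist b x) :
    x = y := by
  have := (mem_segment_iff_wbtw.mp hx).dist_add_dist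
  exact dist_le_zero.mp (by linarith [dist_nonneg (x := x) (y := y)])

lemma mem_segment_of_mem_convexHull_of_dist_eq (hx : a ∈ convexHull ℝ {b, c, d})
    (hab : dist b a = r) (hbc : dist b c ≤ r) (hbd : dist b d ≤ r) : a ∈ segment ℝ c d := by
  rw [convexHull_insert (insert_nonempty c {d}), convexHull_pair, mem_convexJoin] at hx
  obtain ⟨b', hb', y, hy, hay⟩ := hx
  rw [mem_singleton_iff] at hb'
  subst b'
  have hby : y ∈ Metric.closedBall b r :=
    (convex_closedBall b r).segment_subset (Metric.mem_closedBall'.mpr hbc)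
      (Metric.mem_closedBall'.mpr hbd) hy
  rwa [eq_of_mem_segment_of_dist_le hay (hab ▸ Metric.mem_closedBall'.mp hby)]

lemma not_affineIndependent_of_finrank_le_two [FiniteDimensional ℝ E]
    (hE : Module.finrank ℝ E ≤ 2) (p : Fin 4 → E) : ¬ AffineIndependent ℝ p := fun h => by
  have h₁ := h.card_le_finrank_succ
  have h₂ := Submodule.finrank_le (vectorSpan ℝ (range p))
  rw [Fintype.card_fin] at h₁
  omega

variable [StrictConvexSpace ℝ E]

lemma mem_segment_inter_of_mem_segment_inter_of_dist_eq (hab : dist a b = r)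
    (hcd : dist c d = r) (hac : dist a c ≤ r) (hbd : dist b d ≤ r)
    (hx : x ∈ segment ℝ a c ∩ segment ℝ b d) : x ∈ segment ℝ a b ∩ segment ℝ c d := by
  have h₁ := (mem_segment_iff_wbtw.mp hx.1).dist_add_dist
  have h₂ := (mem_segment_iff_wbtw.mp hx.2).dist_add_dist
  have t₁ := dist_triangle a x b
  have t₂ := dist_triangle c x d
  rw [dist_comm x c] at h₁
  rw [dist_comm b x] at h₂
  simp only [mem_inter_iff, mem_segment_iff_wbtw, ← dist_add_dist_eq_iff]
  constructor <;> linarith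

lemma segment_inter_nonempty_of_dist_eq [FiniteDimensional ℝ E] (hE : Module.finrank ℝ E ≤ 2)
    (hab : dist a b = r) (hcd : dist c d = r) (hac : dist a c ≤ r) (had : dist a d ≤ r)
    (hbc : dist b c ≤ r) (hbd : dist b d ≤ r) : (segment ℝ a b ∩ segment ℝ c d).Nonempty := by
  obtain ⟨I, x, hxI, hxJ⟩ := Convex.radon_partition
    (not_affineIndependent_of_finrank_le_two hE ![a, b, c, d])
  wlog h0 : 0 ∈ I generalizing I
  · exact this Iᶜ hxJ (by rwa [compl_compl]) h0
  -- `I = univ` is discarded by `simp`; the bullets treat, in order,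
  -- `I = {0,1,2}, {0,1,3}, {0,1}, {0,2,3}, {0,2}, {0,3}, {0}`.
  by_cases h1 : 1 ∈ I <;> by_cases h2 : 2 ∈ I <;> by_cases h3 : 3 ∈ I <;>
    simp only [image, Fin.exists_fin_succ, Fin.isValue, Matrix.cons_val_zero, true_and,
      Matrix.cons_val_succ, Fin.succ_zero_eq_one, Fin.succ_one_eq_two, Matrix.cons_val_fin_one,
      exists_and_right, Fin.reduceSucc, IsEmpty.exists_iff, or_false, false_or, or_self, false_and,
      ofPred_or, ofPred_false, ofPred_eq_eq_singleton', union_singleton, union_insert,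
      convexHull_pair, convexHull_singleton, convexHull_empty, mem_singleton_iff,
      mem_empty_iff_false, mem_compl_iff, not_true_eq_false, not_false_eq_true, h0, h1, h2, h3]
      at hxI hxJ
  · subst hxJ
    refine ⟨x, ?_, right_mem_segment ℝ c x⟩
    rw [segment_symm]
    exact mem_segment_of_mem_convexHull_of_dist_eq hxI hcd (dist_comm b c ▸ hbc)
      (dist_comm a c ▸ hac)
  · subst hxJ
    refine ⟨x, ?_, left_mem_segment ℝ x d⟩
    rw [segment_symm]
    exact mem_segment_of_mem_convexHull_of_dist_eq hxI (dist_comm x d ▸ hcd)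
      (dist_comm b d ▸ hbd) (dist_comm a d ▸ had)
  · exact ⟨x, segment_symm ℝ b a ▸ hxI, segment_symm ℝ d c ▸ hxJ⟩
  · subst hxJ
    rw [pair_comm c a, insert_comm d a] at hxI
    refine ⟨x, right_mem_segment ℝ a x, ?_⟩
    rw [segment_symm]
    exact mem_segment_of_mem_convexHull_of_dist_eq hxI hab had hac
  · rw [segment_symm] at hxI hxJ
    exact ⟨x, mem_segment_inter_of_mem_segment_inter_of_dist_eq hab hcd hac hbd ⟨hxI, hxJ⟩⟩
  · rw [segment_symm] at hxI hxJ
    obtain ⟨hxab, hxdc⟩ := mem_segment_inter_of_mem_segment_inter_of_dist_eq hab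
      (dist_comm c d ▸ hcd) had hbc ⟨hxI, hxJ⟩
    exact ⟨x, hxab, segment_symm ℝ d c ▸ hxdc⟩
  · subst hxI
    rw [pair_comm c b, insert_comm d b] at hxJ
    refine ⟨x, left_mem_segment ℝ x b, ?_⟩
    rw [segment_symm]
    exact mem_segment_of_mem_convexHull_of_dist_eq hxJ (dist_comm x b ▸ hab)
      (dist_comm b d ▸ hbd) (dist_comm b c ▸ hbc)

lemma notMem_affineSpan_pair_of_dist_eq {q : E} (hab : dist a b = r) (hxq : dist x q = r)
    (hxa : dist x a ≤ r) (hxb : dist x b ≤ r) (hqa : dist q a ≤ r) (hqb : dist q b ≤ r)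
    (hxa' : x ≠ a) (hxb' : x ≠ b) : x ∉ line[ℝ, a, b] := by
  intro hx
  obtain ⟨t, rfl⟩ := mem_affineSpan_pair_iff_exists_lineMap_eq.mp hx
  have hab' : a ≠ b := by
    rintro rfl
    exact hxa' (AffineMap.lineMap_same_apply a t)
  have hr : 0 < r := hab ▸ dist_pos.mpr hab'
  have ht₀ : |t| ≤ 1 := by
    rw [dist_lineMap_left, hab, Real.norm_eq_abs] at hxa
    exact (mul_le_iff_le_one_left hr).mp hxa
  have ht₁ : |1 - t| ≤ 1 := by
    rw [dist_lineMap_right, hab, Real.norm_eq_abs] at hxb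
    exact (mul_le_iff_le_one_left hr).mp hxb
  have htne₀ : t ≠ 0 := by rintro rfl; exact hxa' (AffineMap.lineMap_apply_zero a b)
  have htne₁ : t ≠ 1 := by rintro rfl; exact hxb' (AffineMap.lineMap_apply_one a b)
  have hseg : AffineMap.lineMap a b t ∈ openSegment ℝ a b := by
    rw [openSegment_eq_image_lineMap]
    obtain ⟨-, ht₀'⟩ := abs_le.mp ht₀
    obtain ⟨-, ht₁'⟩ := abs_le.mp ht₁
    exact ⟨t, ⟨lt_of_le_of_ne (by linarith) htne₀.symm, lt_of_le_of_ne ht₀' htne₁⟩, rfl⟩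
  have hball := (strictConvex_closedBall ℝ q r).openSegment_subset
    (Metric.mem_closedBall'.mpr hqa) (Metric.mem_closedBall'.mpr hqb) hab' hseg
  rw [interior_closedBall q hr.ne', Metric.mem_ball] at hball
  exact hball.ne hxq

end Geometry

namespace AffineSubspace

variable {E : Type*} [AddCommGroup E] [Module ℝ E] {s : AffineSubspace ℝ E} {x y z : E}

lemma eq_or_sSameSide_of_mem_segment (hy : y ∈ segment ℝ x z) (hx : x ∈ s) (hz : z ∉ s) :
    y = x ∨ s.SSameSide y z := by
  rw [segment_eq_image_lineMap] at hy
  obtain ⟨t, ⟨ht, -⟩, rfl⟩ := hy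
  rcases ht.eq_or_lt with rfl | ht
  · exact Or.inl (AffineMap.lineMap_apply_zero x z)
  · exact Or.inr (sSameSide_lineMap_left hx hz ht)

lemma sOppSide_of_mem_segment (hy : y ∈ segment ℝ x z) (hys : y ∈ s) (hx : x ∉ s)
    (hz : z ∉ s) : s.SOppSide x z :=
  ⟨wOppSide_iff_exists_wbtw.mpr ⟨y, hys, mem_segment_iff_wbtw.mp hy⟩, hx, hz⟩

lemma eq_of_mem_segment_inter_of_sOppSide {x₀ x₁ x₂ x₃ : E} (h : s.SOppSide x₂ x₃)
    (hx₀ : x₀ ∈ s) (hx₁ : x₁ ∈ s) (hy : y ∈ segment ℝ x₁ x₂ ∩ segment ℝ x₀ x₃) : x₁ = x₀ := by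
  rcases eq_or_sSameSide_of_mem_segment hy.1 hx₁ h.left_notMem with rfl | h₁ <;>
    rcases eq_or_sSameSide_of_mem_segment hy.2 hx₀ h.right_notMem with h₀ | h₀
  · exact h₀
  · exact absurd hx₁ h₀.left_notMem
  · exact absurd (h₀ ▸ hx₀) h₁.left_notMem
  · exact absurd (h₁.symm.trans h₀) h.not_sSameSide

end AffineSubspace

open AffineSubspace

theorem SimpleGraph.Walk.IsCycle.odd_length_of_segments_meet {V E : Type*} [AddCommGroup E]
    [Module ℝ E] {G : SimpleGraph V} {p : V → E} (hne : ∀ ⦃i j⦄, G.Adj i j → p i ≠ p j)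
    (hmeet : ∀ ⦃i j k l⦄, G.Adj i j → G.Adj k l →
      (segment ℝ (p i) (p j) ∩ segment ℝ (p k) (p l)).Nonempty)
    (hline : ∀ ⦃i j k l⦄, G.Adj i j → G.Adj k l → k ≠ i → k ≠ j → p k ∉ line[ℝ, p i, p j])
    {v : V} {w : G.Walk v v} (hw : w.IsCycle) : Odd w.length := by
  set u : ℕ → E := fun i => p (w.getVert i)
  set s := line[ℝ, u 0, u 1]
  by_contra hodd
  obtain ⟨M, hM⟩ := Nat.not_odd_iff_even.mp hodd
  have hlen := hw.three_le_length
  have hadj : ∀ i < w.length, G.Adj (w.getVert i) (w.getVert (i + 1)) :=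
    fun i hi => w.adj_getVert_succ hi
  have hinj : ∀ i < w.length, ∀ j < w.length, w.getVert i = w.getVert j → i = j :=
    fun i hi j hj => hw.getVert_injOn' (by rw [mem_ofPred_eq]; omega) (by rw [mem_ofPred_eq]; omega)
  have hoff : ∀ i, 2 ≤ i → i < w.length → u i ∉ s := fun i h₂ hi =>
    hline (hadj 0 (by omega)) (hadj i hi) (fun h => by have := hinj i hi 0 (by omega) h; omega)
      (fun h => by have := hinj i hi 1 (by omega) h; omega)
  have hopp : ∀ i, 2 ≤ i → i + 1 < w.length → s.SOppSide (u i) (u (i + 1)) := by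
    intro i h₂ hi
    obtain ⟨y, hy₁, hy₂⟩ : (segment ℝ (u 0) (u 1) ∩ segment ℝ (u i) (u (i + 1))).Nonempty :=
      hmeet (hadj 0 (by omega)) (hadj i (by omega))
    exact sOppSide_of_mem_segment hy₂ (mem_segment_iff_wbtw.mp hy₁).mem_affineSpan
      (hoff i h₂ (by omega)) (hoff (i + 1) (by omega) hi)
  have halt : ∀ k, 2 * k + 3 < w.length → s.SOppSide (u 2) (u (2 * k + 3)) := by
    intro k
    induction k with
    | zero => exact hopp 2 le_rfl
    | succ k ih =>
      intro hk
      exact ((ih (by omega)).trans (hopp _ (by omega) (by omega))).trans_sOppSide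
        (hopp _ (by omega) (by omega))
  have hfar : s.SOppSide (u 2) (u (w.length - 1)) := by
    have := halt (M - 2) (by omega)
    rwa [show 2 * (M - 2) + 3 = w.length - 1 by omega] at this
  obtain ⟨y, hy₁, hy₂⟩ : (segment ℝ (u 1) (u 2) ∩
      segment ℝ (u (w.length - 1)) (u (w.length - 1 + 1))).Nonempty :=
    hmeet (hadj 1 (by omega)) (hadj (w.length - 1) (by omega))
  have hu : u (w.length - 1 + 1) = u 0 := by
    simp only [u, Nat.sub_add_cancel (by omega : 1 ≤ w.length), Walk.getVert_length,
      Walk.getVert_zero]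
  rw [hu, segment_symm] at hy₂
  exact hne (hadj 0 (by omega)) (eq_of_mem_segment_inter_of_sOppSide hfar
    (left_mem_affineSpan_pair ℝ _ _) (right_mem_affineSpan_pair ℝ _ _) ⟨hy₁, hy₂⟩).symm

theorem odd_length_of_isCycle_of_dist_eq_diam {V E : Type*}
    [NormedAddCommGroup E] [NormedSpace ℝ E] [StrictConvexSpace ℝ E] [FiniteDimensional ℝ E]
    (hE : Module.finrank ℝ E ≤ 2) {G : SimpleGraph V} {p : V → E} (hp : Function.Injective p)
    {r : ℝ} (hr : ∀ i j, dist (p i) (p j) ≤ r)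
    (hG : ∀ ⦃i j⦄, G.Adj i j → dist (p i) (p j) = r)
    {v : V} {w : G.Walk v v} (hw : w.IsCycle) : Odd w.length :=
  hw.odd_length_of_segments_meet (fun _ _ h => hp.ne h.ne)
    (fun i j k l hij hkl => segment_inter_nonempty_of_dist_eq hE (hG hij) (hG hkl) (hr i k)
      (hr i l) (hr j k) (hr j l))
    (fun i j k l hij hkl hki hkj => notMem_affineSpan_pair_of_dist_eq (hG hij) (hG hkl)
      (hr k i) (hr k j) (hr l i) (hr l j) (hp.ne hki) (hp.ne hkj))

lemma Delta_pos_iff_injective {n : ℕ} {z : Fin n → ℂ} : 0 < Delta n z ↔ Function.Injective z := by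
  refine ⟨fun h i j hij => ?_, fun h => Finset.prod_pos fun q hq =>
    dist_pos.mpr (h.ne (Finset.mem_filter.mp hq).2)⟩
  by_contra hne
  have : Delta n z = 0 := Finset.prod_eq_zero (i := (i, j)) (by simp [hne]) (by simp [hij])
  exact h.ne' this

lemma bddAbove_Delta_admissible (n : ℕ) :
    BddAbove {d : ℝ | ∃ z : Fin n → ℂ, Admissible n z ∧ Delta n z = d} := by
  refine ⟨2 ^ (Finset.univ.filter (fun p : Fin n × Fin n => p.1 ≠ p.2)).card, ?_⟩
  rintro _ ⟨z, hz, rfl⟩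
  calc Delta n z ≤ ∏ _p ∈ Finset.univ.filter (fun p : Fin n × Fin n => p.1 ≠ p.2), (2 : ℝ) :=
        Finset.prod_le_prod (fun _ _ => dist_nonneg) fun p _ => hz p.1 p.2
    _ = _ := Finset.prod_const 2

lemma Dmax_pos (n : ℕ) : 0 < Dmax n := by
  set z : Fin n → ℂ := fun i => ((i / n : ℝ) : ℂ)
  have hmem : ∀ i : Fin n, (i / n : ℝ) ∈ Set.Icc (0 : ℝ) 1 := fun i =>
    ⟨by positivity, div_le_one_of_le₀ (by exact_mod_cast i.is_lt.le) (Nat.cast_nonneg n)⟩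
  have hadm : Admissible n z := fun i j => by
    rw [Complex.isometry_ofReal.dist_eq]
    linarith [Real.dist_le_of_mem_Icc_01 (hmem i) (hmem j)]
  have hinj : Function.Injective z := fun i j h => by
    have hn : (n : ℝ) ≠ 0 := by exact_mod_cast (Fin.pos i).ne'
    have := Complex.ofReal_injective h
    rw [div_left_inj' hn] at this
    exact Fin.ext (by exact_mod_cast this)
  exact (Delta_pos_iff_injective.mpr hinj).trans_le
    (le_csSup (bddAbove_Delta_admissible n) ⟨z, hadm, rfl⟩)

theorem stmt8_general (n : ℕ) (z : Fin n → ℂ)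
    (hadm : Admissible n z) (hmax : Delta n z = Dmax n) :
    ∀ (v : Fin n) (w : (diamGraph n z).Walk v v), w.IsCycle → Odd w.length := by
  have hinj : Function.Injective z := Delta_pos_iff_injective.mp (hmax ▸ Dmax_pos n)
  intro v w hw
  refine odd_length_of_isCycle_of_dist_eq_diam Complex.finrank_real_complex.le hinj hadm ?_ hw
  exact fun _ _ h => h.2

theorem stmt8 (n : ℕ) (hn : 2 ≤ n) (z : Fin n → ℂ)
    (hadm : Admissible n z) (hmax : Delta n z = Dmax n) :
    ∀ (v : Fin n) (w : (diamGraph n z).Walk v v), w.IsCycle → Odd w.length :=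
  stmt8_general n z hadm hmax
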